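/- arXiv:2509.22500 — 4 statements merged into one kernel-verified Lean document; each statement's English description precedes it below -/
import Mathlib

section
/- Let f : ℝ^d → ℝ and h : ℝ^d → ℝ^n be differentiable, and fix c > 0, η_x > 0, η > 0. Consider the ALM iteration: x_{t+1} = x_t - η_x·(∇f(x_t) + (∇h(x_t))ᵀ(μ_t + c·h(x_t))), μ_{t+1} = μ_t + η·h(x_{t+1}); and the optimistic iteration with coefficient ω = c: ν_{t+1} = ν_t + η·h(x'_t) + c·(h(x'_t) - h(x'_{t-1})), x'_{t+1} = x'_t - η_x·(∇f(x'_t) + (∇h(x'_t))ᵀ ν_{t+1}) (with the convention ν_1 = ν_0 + η·h(x'_0) at the first step). If x'_0 = x_0 and ν_0 = μ_0 + (c - η)·h(x_0), then x'_t = x_t for all t ≥ 0, and moreover ν_{t+1} = μ_t + c·h(x_t) for all t ≥ 0. -/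
/-!
The optimistic correction `c • (h (x' t) - h (x' (t - 1)))` telescopes, so that `ν (t + 1)` stays
equal to the effective multiplier `μ t + c • h (x t)` of the augmented Lagrangian step. Both
primal updates see the dual variable only through that multiplier, so the primal iterates
coincide by induction.
-/

section OptimisticAugmentedLagrangian

variable {R E F : Type*} [CommRing R] [AddCommGroup F] [Module R F]
  (step : E → F → E) (h : E → F) (c η : R) {x x' : ℕ → E} {μ ν : ℕ → F}

theorem optimistic_dual_succ_eq_augmented_multiplier
    (hμ : ∀ t, μ (t + 1) = μ t + η • h (x (t + 1)))
    (hν : ∀ t, 1 ≤ t → ν (t + 1) = ν t + η • h (x' t) + c • (h (x' t) - h (x' (t - 1))))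
    {t : ℕ} (hxt : x' t = x t) (hxt' : x' (t + 1) = x (t + 1))
    (hνt : ν (t + 1) = μ t + c • h (x t)) :
    ν (t + 1 + 1) = μ (t + 1) + c • h (x (t + 1)) := by
  rw [hν (t + 1) (Nat.le_add_left 1 t), Nat.add_sub_cancel, hμ, hνt, hxt, hxt']
  module

theorem optimistic_iterates_eq_augmented
    (hx : ∀ t, x (t + 1) = step (x t) (μ t + c • h (x t)))
    (hμ : ∀ t, μ (t + 1) = μ t + η • h (x (t + 1)))
    (hν1 : ν 1 = ν 0 + η • h (x' 0))
    (hν : ∀ t, 1 ≤ t → ν (t + 1) = ν t + η • h (x' t) + c • (h (x' t) - h (x' (t - 1))))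
    (hx' : ∀ t, x' (t + 1) = step (x' t) (ν (t + 1)))
    (hx0 : x' 0 = x 0) (hν0 : ν 0 = μ 0 + (c - η) • h (x 0)) :
    ∀ t, x' t = x t ∧ ν (t + 1) = μ t + c • h (x t) := by
  intro t
  induction t with
  | zero =>
    refine ⟨hx0, ?_⟩
    rw [hν1, hν0, hx0]
    module
  | succ t ih =>
    obtain ⟨hxt, hνt⟩ := ih
    have hxt' : x' (t + 1) = x (t + 1) := by rw [hx', hx, hxt, hνt]
    exact ⟨hxt', optimistic_dual_succ_eq_augmented_multiplier h c η hμ hν hxt hxt' hνt⟩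

end OptimisticAugmentedLagrangian

theorem stmt_4_general (d n : ℕ)
    (f : EuclideanSpace ℝ (Fin d) → ℝ)
    (h : EuclideanSpace ℝ (Fin d) → EuclideanSpace ℝ (Fin n))
    (c ηx η : ℝ)
    (x x' : ℕ → EuclideanSpace ℝ (Fin d))
    (μ ν : ℕ → EuclideanSpace ℝ (Fin n))
    -- ALM iteration (primal-first GDA on the Augmented Lagrangian)
    (hx : ∀ t, x (t + 1) = x t - ηx •
      (gradient f (x t) + (fderiv ℝ h (x t)).adjoint (μ t + c • h (x t))))
    (hμ : ∀ t, μ (t + 1) = μ t + η • h (x (t + 1)))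
    -- optimistic iteration with coefficient ω = c on the standard Lagrangian
    (hν1 : ν 1 = ν 0 + η • h (x' 0))
    (hν : ∀ t, 1 ≤ t → ν (t + 1) =
      ν t + η • h (x' t) + c • (h (x' t) - h (x' (t - 1))))
    (hx' : ∀ t, x' (t + 1) = x' t - ηx •
      (gradient f (x' t) + (fderiv ℝ h (x' t)).adjoint (ν (t + 1))))
    -- matching initializations
    (hx0 : x' 0 = x 0)
    (hν0 : ν 0 = μ 0 + (c - η) • h (x 0)) :
    (∀ t, x' t = x t) ∧ (∀ t, ν (t + 1) = μ t + c • h (x t)) := by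
  have key := optimistic_iterates_eq_augmented
    (fun y m ↦ y - ηx • (gradient f y + (fderiv ℝ h y).adjoint m)) h c η hx hμ hν1 hν hx' hx0 hν0
  exact ⟨fun t ↦ (key t).1, fun t ↦ (key t).2⟩

theorem stmt_4 (d n : ℕ)
    (f : EuclideanSpace ℝ (Fin d) → ℝ)
    (h : EuclideanSpace ℝ (Fin d) → EuclideanSpace ℝ (Fin n))
    (hf : Differentiable ℝ f) (hh : Differentiable ℝ h)
    (c ηx η : ℝ) (hc : 0 < c) (hηx : 0 < ηx) (hη : 0 < η)
    (x x' : ℕ → EuclideanSpace ℝ (Fin d))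
    (μ ν : ℕ → EuclideanSpace ℝ (Fin n))
    -- ALM iteration (primal-first GDA on the Augmented Lagrangian)
    (hx : ∀ t, x (t + 1) = x t - ηx •
      (gradient f (x t) + (fderiv ℝ h (x t)).adjoint (μ t + c • h (x t))))
    (hμ : ∀ t, μ (t + 1) = μ t + η • h (x (t + 1)))
    -- optimistic iteration with coefficient ω = c on the standard Lagrangian
    (hν1 : ν 1 = ν 0 + η • h (x' 0))
    (hν : ∀ t, 1 ≤ t → ν (t + 1) =
      ν t + η • h (x' t) + c • (h (x' t) - h (x' (t - 1))))
    (hx' : ∀ t, x' (t + 1) = x' t - ηx •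
      (gradient f (x' t) + (fderiv ℝ h (x' t)).adjoint (ν (t + 1))))
    -- matching initializations
    (hx0 : x' 0 = x 0)
    (hν0 : ν 0 = μ 0 + (c - η) • h (x 0)) :
    (∀ t, x' t = x t) ∧ (∀ t, ν (t + 1) = μ t + c • h (x t)) :=
  stmt_4_general d n f h c ηx η x x' μ ν hx hμ hν1 hν hx' hx0 hν0
end

section
/- Let A ∈ ℝ^{d×d} be symmetric, B ∈ ℝ^{k×d}, and η_x, η, c > 0 with η < c. Define the block matrix J_AL = [[I - η_x(A + c BᵀB), -η_x Bᵀ], [η B(I - η_x(A + c BᵀB)), I - η_x η B Bᵀ]]. Then J_AL is similar to J' = [[I - η_x A - η_x(c+η)BᵀB, -η_x Bᵀ], [η B, I]], via the invertible transformation P = [[I, 0], [-η B, I]], i.e., J_AL = P⁻¹ J' P. -/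
/-!
Conjugating by a lower unitriangular block matrix `[[1, 0], [C, 1]]` adds `Y C` to the top-left
block. With `C = -η B` and `Y = -ηx Bᵀ` this turns the `-ηx (c + η) BᵀB` of `J'` into the
`-ηx c BᵀB` of `J_AL`; the other blocks then match directly.
-/

open Matrix

section LowerUnitriangular

variable {m n R : Type*} [Fintype m] [Fintype n] [DecidableEq m] [DecidableEq n] [CommRing R]

theorem inv_fromBlocks_one_zero_one (C : Matrix n m R) :
    (fromBlocks (1 : Matrix m m R) 0 C 1)⁻¹ = fromBlocks 1 0 (-C) (1 : Matrix n n R) := by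
  simp [inv_fromBlocks_zero₁₂_of_isUnit_iff]

theorem inv_fromBlocks_one_zero_one_mul_mul (C : Matrix n m R)
    (X : Matrix m m R) (Y : Matrix m n R) (Z : Matrix n m R) (W : Matrix n n R) :
    (fromBlocks 1 0 C 1)⁻¹ * fromBlocks X Y Z W * fromBlocks 1 0 C 1 =
      fromBlocks (X + Y * C) Y (Z + W * C - C * (X + Y * C)) (W - C * Y) := by
  rw [inv_fromBlocks_one_zero_one, fromBlocks_multiply, fromBlocks_multiply]
  simp only [Matrix.one_mul, Matrix.mul_one, Matrix.zero_mul, Matrix.mul_zero, add_zero, zero_add,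
    Matrix.neg_mul, Matrix.mul_add, Matrix.add_mul, Matrix.mul_assoc]
  congr 1 <;> abel

end LowerUnitriangular

theorem stmt_7_general (d k : ℕ) (A : Matrix (Fin d) (Fin d) ℝ)
    (B : Matrix (Fin k) (Fin d) ℝ) (ηx η c : ℝ) :
    IsUnit (Matrix.fromBlocks (1 : Matrix (Fin d) (Fin d) ℝ) 0
        (-(η • B)) (1 : Matrix (Fin k) (Fin k) ℝ)) ∧
    Matrix.fromBlocks
        (1 - ηx • (A + c • (Bᵀ * B))) (-(ηx • Bᵀ))
        (η • (B * (1 - ηx • (A + c • (Bᵀ * B))))) (1 - (ηx * η) • (B * Bᵀ)) =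
      (Matrix.fromBlocks (1 : Matrix (Fin d) (Fin d) ℝ) 0
          (-(η • B)) (1 : Matrix (Fin k) (Fin k) ℝ))⁻¹ *
        Matrix.fromBlocks
          (1 - ηx • A - (ηx * (c + η)) • (Bᵀ * B)) (-(ηx • Bᵀ))
          (η • B) (1 : Matrix (Fin k) (Fin k) ℝ) *
        Matrix.fromBlocks (1 : Matrix (Fin d) (Fin d) ℝ) 0
          (-(η • B)) (1 : Matrix (Fin k) (Fin k) ℝ) := by
  refine ⟨isUnit_fromBlocks_zero₁₂.2 ⟨isUnit_one, isUnit_one⟩, ?_⟩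
  have hprimal : 1 - ηx • A - (ηx * (c + η)) • (Bᵀ * B) + -(ηx • Bᵀ) * -(η • B) =
      1 - ηx • (A + c • (Bᵀ * B)) := by
    simp only [Matrix.neg_mul, Matrix.mul_neg, Matrix.smul_mul, Matrix.mul_smul]
    module
  have hdual : 1 - -(η • B) * -(ηx • Bᵀ) = 1 - (ηx * η) • (B * Bᵀ) := by
    simp only [Matrix.neg_mul, Matrix.mul_neg, Matrix.smul_mul, Matrix.mul_smul]
    module
  rw [inv_fromBlocks_one_zero_one_mul_mul, hprimal, hdual, Matrix.one_mul, add_neg_cancel,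
    zero_sub, Matrix.neg_mul, neg_neg, Matrix.smul_mul]

theorem stmt_7 (d k : ℕ) (A : Matrix (Fin d) (Fin d) ℝ) (hA : A.IsSymm)
    (B : Matrix (Fin k) (Fin d) ℝ) (ηx η c : ℝ)
    (hηx : 0 < ηx) (hη : 0 < η) (hc : 0 < c) (hηc : η < c) :
    IsUnit (Matrix.fromBlocks (1 : Matrix (Fin d) (Fin d) ℝ) 0
        (-(η • B)) (1 : Matrix (Fin k) (Fin k) ℝ)) ∧
    Matrix.fromBlocks
        (1 - ηx • (A + c • (Bᵀ * B))) (-(ηx • Bᵀ))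
        (η • (B * (1 - ηx • (A + c • (Bᵀ * B))))) (1 - (ηx * η) • (B * Bᵀ)) =
      (Matrix.fromBlocks (1 : Matrix (Fin d) (Fin d) ℝ) 0
          (-(η • B)) (1 : Matrix (Fin k) (Fin k) ℝ))⁻¹ *
        Matrix.fromBlocks
          (1 - ηx • A - (ηx * (c + η)) • (Bᵀ * B)) (-(ηx • Bᵀ))
          (η • B) (1 : Matrix (Fin k) (Fin k) ℝ) *
        Matrix.fromBlocks (1 : Matrix (Fin d) (Fin d) ℝ) 0
          (-(η • B)) (1 : Matrix (Fin k) (Fin k) ℝ) :=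
  stmt_7_general d k A B ηx η c
end

section
/- Let f : ℝ^d → ℝ and h : ℝ^d → ℝ^n be differentiable, and fix c > 0, ω > 0, η_x > 0, η > 0. Applying dual-first gradient descent–optimistic ascent with optimism coefficient ω to the Augmented Lagrangian L_c(x,μ) = f(x) + μᵀh(x) + (c/2)‖h(x)‖² yields primal iterates that coincide with those of dual-first gradient descent–optimistic ascent with optimism coefficient c + ω applied to the standard Lagrangian L(x,μ) = f(x) + μᵀh(x), under the dual initialization shift ν_0 = μ_0 + (c)·h(x_0) relating the two multiplier sequences and matching primal initialization x_0. -/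
/-!
Along the two runs the multipliers stay related by `ν (t + 1) = μ (t + 1) + c • h (x t)`, which is
exactly the multiplier the augmented-Lagrangian primal step sees, so the two primal steps coincide.
The invariant propagates because an extra optimism `c` on `h` advances the shift `c • h (x (t - 1))`
to `c • h (x t)`.
-/

section CompoundingOptimism

variable {R E F : Type*} [CommRing R] [AddCommGroup F] [Module R F]

theorem optimistic_step_add_shift (m g g' : F) (c ω η : R) :
    (m + c • g') + η • g + (c + ω) • (g - g') = (m + η • g + ω • (g - g')) + c • g := by
  module

theorem dualFirst_shifted_runs_eq (h : E → F) (step : E → F → E) (c ω η : R)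
    (x x' : ℕ → E) (μ ν : ℕ → F)
    (hμ1 : μ 1 = μ 0 + η • h (x 0))
    (hμ : ∀ t, 1 ≤ t → μ (t + 1) = μ t + η • h (x t) + ω • (h (x t) - h (x (t - 1))))
    (hx : ∀ t, x (t + 1) = step (x t) (μ (t + 1) + c • h (x t)))
    (hν1 : ν 1 = ν 0 + η • h (x' 0))
    (hν : ∀ t, 1 ≤ t → ν (t + 1) = ν t + η • h (x' t) + (c + ω) • (h (x' t) - h (x' (t - 1))))
    (hx' : ∀ t, x' (t + 1) = step (x' t) (ν (t + 1)))
    (hx0 : x' 0 = x 0) (hν0 : ν 0 = μ 0 + c • h (x 0)) (t : ℕ) :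
    x' t = x t ∧ ν (t + 1) = μ (t + 1) + c • h (x t) := by
  induction t with
  | zero =>
    refine ⟨hx0, ?_⟩
    rw [hν1, hν0, hμ1, hx0]
    module
  | succ t ih =>
    obtain ⟨hxt, hνt⟩ := ih
    have hxt' : x' (t + 1) = x (t + 1) := by rw [hx' t, hx t, hxt, hνt]
    refine ⟨hxt', ?_⟩
    have hνs := hν (t + 1) (Nat.le_add_left 1 t)
    have hμs := hμ (t + 1) (Nat.le_add_left 1 t)
    rw [Nat.add_sub_cancel] at hνs hμs
    rw [hνs, hμs, hνt, hxt', hxt, optimistic_step_add_shift]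

end CompoundingOptimism

theorem stmt_16_general (d n : ℕ)
    (f : EuclideanSpace ℝ (Fin d) → ℝ)
    (h : EuclideanSpace ℝ (Fin d) → EuclideanSpace ℝ (Fin n))
    (c ω ηx η : ℝ)
    (x x' : ℕ → EuclideanSpace ℝ (Fin d))
    (μ ν : ℕ → EuclideanSpace ℝ (Fin n))
    -- dual-first optimistic ascent with coefficient ω on the Augmented
    -- Lagrangian L_c :  ∇_μ L_c(x,μ) = h(x),
    -- ∇_x L_c(x,μ) = ∇f(x) + ∇h(x)ᵀ(μ + c h(x))
    (hμ1 : μ 1 = μ 0 + η • h (x 0))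
    (hμ : ∀ t, 1 ≤ t → μ (t + 1) =
      μ t + η • h (x t) + ω • (h (x t) - h (x (t - 1))))
    (hx : ∀ t, x (t + 1) = x t - ηx •
      (gradient f (x t) + (fderiv ℝ h (x t)).adjoint (μ (t + 1) + c • h (x t))))
    -- dual-first optimistic ascent with coefficient c + ω on the standard
    -- Lagrangian L :  ∇_μ L(x,μ) = h(x), ∇_x L(x,μ) = ∇f(x) + ∇h(x)ᵀμ
    (hν1 : ν 1 = ν 0 + η • h (x' 0))
    (hν : ∀ t, 1 ≤ t → ν (t + 1) =
      ν t + η • h (x' t) + (c + ω) • (h (x' t) - h (x' (t - 1))))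
    (hx' : ∀ t, x' (t + 1) = x' t - ηx •
      (gradient f (x' t) + (fderiv ℝ h (x' t)).adjoint (ν (t + 1))))
    -- matching primal initialization and shifted dual initialization
    (hx0 : x' 0 = x 0)
    (hν0 : ν 0 = μ 0 + c • h (x 0)) :
    ∀ t, x' t = x t := fun t =>
  (dualFirst_shifted_runs_eq h (fun y m => y - ηx • (gradient f y + (fderiv ℝ h y).adjoint m))
    c ω η x x' μ ν hμ1 hμ hx hν1 hν hx' hx0 hν0 t).1

theorem stmt_16 (d n : ℕ)
    (f : EuclideanSpace ℝ (Fin d) → ℝ)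
    (h : EuclideanSpace ℝ (Fin d) → EuclideanSpace ℝ (Fin n))
    (hf : Differentiable ℝ f) (hh : Differentiable ℝ h)
    (c ω ηx η : ℝ) (hc : 0 < c) (hω : 0 < ω) (hηx : 0 < ηx) (hη : 0 < η)
    (x x' : ℕ → EuclideanSpace ℝ (Fin d))
    (μ ν : ℕ → EuclideanSpace ℝ (Fin n))
    -- dual-first optimistic ascent with coefficient ω on the Augmented
    -- Lagrangian L_c :  ∇_μ L_c(x,μ) = h(x),
    -- ∇_x L_c(x,μ) = ∇f(x) + ∇h(x)ᵀ(μ + c h(x))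
    (hμ1 : μ 1 = μ 0 + η • h (x 0))
    (hμ : ∀ t, 1 ≤ t → μ (t + 1) =
      μ t + η • h (x t) + ω • (h (x t) - h (x (t - 1))))
    (hx : ∀ t, x (t + 1) = x t - ηx •
      (gradient f (x t) + (fderiv ℝ h (x t)).adjoint (μ (t + 1) + c • h (x t))))
    -- dual-first optimistic ascent with coefficient c + ω on the standard
    -- Lagrangian L :  ∇_μ L(x,μ) = h(x), ∇_x L(x,μ) = ∇f(x) + ∇h(x)ᵀμ
    (hν1 : ν 1 = ν 0 + η • h (x' 0))
    (hν : ∀ t, 1 ≤ t → ν (t + 1) =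
      ν t + η • h (x' t) + (c + ω) • (h (x' t) - h (x' (t - 1))))
    (hx' : ∀ t, x' (t + 1) = x' t - ηx •
      (gradient f (x' t) + (fderiv ℝ h (x' t)).adjoint (ν (t + 1))))
    -- matching primal initialization and shifted dual initialization
    (hx0 : x' 0 = x 0)
    (hν0 : ν 0 = μ 0 + c • h (x 0)) :
    ∀ t, x' t = x t :=
  stmt_16_general d n f h c ω ηx η x x' μ ν hμ1 hμ hx hν1 hν hx' hx0 hν0
end

section
/- Let A be symmetric positive definite d×d and B a k×d matrix with full row rank. Then every eigenvalue of the (d+k)×(d+k) matrix M = [[A, Bᵀ],[-B, 0]] has strictly positive real part, and consequently, for all sufficiently small η > 0, the spectral radius of I - ηM is strictly less than 1. -/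
open Matrix

/-- Spectral radius of a real matrix: the supremum of the moduli of its
complex eigenvalues, i.e. the spectral radius of its complexification. -/
noncomputable def matSpecRad {ι : Type*} [Fintype ι] [DecidableEq ι]
    (M : Matrix ι ι ℝ) : ENNReal :=
  spectralRadius ℂ (M.map (algebraMap ℝ ℂ))

noncomputable abbrev cm {m n : Type*} (M : Matrix m n ℝ) : Matrix m n ℂ :=
  M.map (algebraMap ℝ ℂ)

lemma mem_spectrum_iff_eig {ι : Type*} [Fintype ι] [DecidableEq ι]
    (N : Matrix ι ι ℂ) (σ : ℂ) :
    σ ∈ spectrum ℂ N ↔ ∃ x : ι → ℂ, x ≠ 0 ∧ N *ᵥ x = σ • x := by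
  rw [← AlgEquiv.spectrum_eq Matrix.toLinAlgEquiv' N, ← Module.End.hasEigenvalue_iff_mem_spectrum,
    Module.End.hasEigenvalue_iff, Submodule.ne_bot_iff]
  constructor
  · rintro ⟨x, hx, hx0⟩
    exact ⟨x, hx0, by simpa [Matrix.toLinAlgEquiv'_apply] using
      (Module.End.mem_eigenspace_iff.mp hx)⟩
  · rintro ⟨x, hx0, hx⟩
    exact ⟨x, Module.End.mem_eigenspace_iff.mpr (by simpa [Matrix.toLinAlgEquiv'_apply] using hx), hx0⟩

lemma transpose_mulVec_inj {d k : ℕ} (B : Matrix (Fin k) (Fin d) ℝ) (hB : B.rank = k)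
    (w : Fin k → ℝ) (hw : Bᵀ *ᵥ w = 0) : w = 0 := by
  have hrk : Bᵀ.rank = k := by rw [Matrix.rank_transpose]; exact hB
  have hrn := LinearMap.finrank_range_add_finrank_ker (Bᵀ.mulVecLin)
  rw [Matrix.rank] at hrk
  rw [hrk, Module.finrank_pi] at hrn
  simp only [Fintype.card_fin] at hrn
  have hker : Module.finrank ℝ (LinearMap.ker Bᵀ.mulVecLin) = 0 := by omega
  have : LinearMap.ker Bᵀ.mulVecLin = ⊥ := Submodule.finrank_eq_zero.mp hker
  have hmem : w ∈ LinearMap.ker Bᵀ.mulVecLin := by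
    rw [LinearMap.mem_ker, Matrix.mulVecLin_apply]; exact hw
  rw [this] at hmem
  simpa using hmem

lemma transpose_mulVec_inj_c {d k : ℕ} (B : Matrix (Fin k) (Fin d) ℝ) (hB : B.rank = k)
    (w : Fin k → ℂ) (hw : (cm B)ᵀ *ᵥ w = 0) : w = 0 := by
  have hre : Bᵀ *ᵥ (fun j => (w j).re) = 0 := by
    funext i
    have := congrFun hw i
    have := congrArg Complex.re this
    simpa [mulVec, dotProduct, Complex.re_sum, Complex.mul_re] using this
  have him : Bᵀ *ᵥ (fun j => (w j).im) = 0 := by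
    funext i
    have := congrFun hw i
    have := congrArg Complex.im this
    simpa [mulVec, dotProduct, Complex.im_sum, Complex.mul_im] using this
  have h1 := transpose_mulVec_inj B hB _ hre
  have h2 := transpose_mulVec_inj B hB _ him
  funext j
  exact Complex.ext (congrFun h1 j) (congrFun h2 j)

lemma conj_dot_lemma {d k : ℕ} (B : Matrix (Fin k) (Fin d) ℝ)
    (u : Fin d → ℂ) (v : Fin k → ℂ) :
    star v ⬝ᵥ ((cm B) *ᵥ u) = star (star u ⬝ᵥ ((cm B)ᵀ *ᵥ v)) := by
  simp only [dotProduct, mulVec, Finset.mul_sum, star_sum, transpose_apply,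
    Matrix.map_apply, Pi.star_apply, Complex.star_def, _root_.map_mul, Complex.conj_conj,
    Complex.coe_algebraMap, Complex.conj_ofReal]
  rw [Finset.sum_comm]
  exact Finset.sum_congr rfl fun j _ => Finset.sum_congr rfl fun i _ => by ring

lemma re_star_dot {n : Type*} [Fintype n] (C : Matrix n n ℝ) (w : n → ℂ) :
    (star w ⬝ᵥ ((cm C) *ᵥ w)).re
      = (fun i => (w i).re) ⬝ᵥ (C *ᵥ fun i => (w i).re)
        + (fun i => (w i).im) ⬝ᵥ (C *ᵥ fun i => (w i).im) := by
  simp only [dotProduct, mulVec, Finset.mul_sum, Matrix.map_apply, Pi.star_apply,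
    Complex.coe_algebraMap, Complex.re_sum]
  rw [← Finset.sum_add_distrib]
  refine Finset.sum_congr rfl fun i _ => ?_
  rw [← Finset.sum_add_distrib]
  refine Finset.sum_congr rfl fun j _ => ?_
  simp [Complex.mul_re, Complex.mul_im, Complex.star_def, Complex.conj_re, Complex.conj_im]

lemma star_dot_self {n : Type*} [Fintype n] (w : n → ℂ) :
    star w ⬝ᵥ w = ((∑ i, Complex.normSq (w i) : ℝ) : ℂ) := by
  simp only [dotProduct, Pi.star_apply, Complex.star_def, Complex.ofReal_sum]
  exact Finset.sum_congr rfl fun i _ => (Complex.normSq_eq_conj_mul_self).symm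

lemma normSq_sum_pos {n : Type*} [Fintype n] {w : n → ℂ} (hw : w ≠ 0) :
    0 < ∑ i, Complex.normSq (w i) := by
  obtain ⟨j, hj⟩ := Function.ne_iff.mp hw
  exact Finset.sum_pos' (fun i _ => Complex.normSq_nonneg _)
    ⟨j, Finset.mem_univ j, by simpa [Complex.normSq_pos] using hj⟩

lemma part1 {d k : ℕ} (A : Matrix (Fin d) (Fin d) ℝ) (hA : A.PosDef)
    (B : Matrix (Fin k) (Fin d) ℝ) (hB : B.rank = k) :
    ∀ σ ∈ spectrum ℂ
        ((Matrix.fromBlocks A Bᵀ (-B) (0 : Matrix (Fin k) (Fin k) ℝ)).map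
          (algebraMap ℝ ℂ)), 0 < σ.re := by
  intro σ hσ
  rw [mem_spectrum_iff_eig] at hσ
  obtain ⟨x, hx0, hx⟩ := hσ
  have hmap : (Matrix.fromBlocks A Bᵀ (-B) (0 : Matrix (Fin k) (Fin k) ℝ)).map (algebraMap ℝ ℂ)
      = fromBlocks (cm A) (cm B)ᵀ (-(cm B)) 0 := by
    ext (i | i) (j | j) <;> simp [Matrix.map_apply, fromBlocks]
  rw [hmap, fromBlocks_mulVec] at hx
  set u : Fin d → ℂ := x ∘ Sum.inl with hu_def
  set v : Fin k → ℂ := x ∘ Sum.inr with hv_def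
  have h1 : (cm A) *ᵥ u + (cm B)ᵀ *ᵥ v = σ • u := by
    funext i; have := congrFun hx (Sum.inl i); simpa [hu_def] using this
  have h2 : -((cm B) *ᵥ u) = σ • v := by
    funext j; have := congrFun hx (Sum.inr j)
    simpa [Matrix.neg_mulVec, hv_def] using this
  -- scalar quantities
  set a : ℂ := star u ⬝ᵥ ((cm A) *ᵥ u) with ha_def
  set t : ℂ := star u ⬝ᵥ ((cm B)ᵀ *ᵥ v) with ht_def
  set P : ℝ := ∑ i, Complex.normSq (u i) with hP_def
  set Q : ℝ := ∑ i, Complex.normSq (v i) with hQ_def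
  have e1 : a + t = σ * (P : ℂ) := by
    have := congrArg (fun w => star u ⬝ᵥ w) h1
    simpa [dotProduct_add, dotProduct_smul, smul_eq_mul, star_dot_self, ha_def, ht_def,
      hP_def] using this
  have e2 : -(star v ⬝ᵥ ((cm B) *ᵥ u)) = σ * (Q : ℂ) := by
    have := congrArg (fun w => star v ⬝ᵥ w) h2
    simpa [dotProduct_neg, dotProduct_smul, smul_eq_mul, star_dot_self, hQ_def] using this
  have e2' : -(star t) = σ * (Q : ℂ) := by rw [← conj_dot_lemma B u v]; exact e2
  -- real parts
  have hre : a.re = σ.re * (P + Q) := by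
    have r1 : a.re + t.re = σ.re * P := by
      have := congrArg Complex.re e1
      simpa [Complex.add_re, Complex.mul_re, Complex.ofReal_re, Complex.ofReal_im] using this
    have r2 : -t.re = σ.re * Q := by
      have := congrArg Complex.re e2'
      simpa [Complex.neg_re, Complex.conj_re, Complex.mul_re, Complex.ofReal_re,
        Complex.ofReal_im] using this
    nlinarith [r1, r2]
  by_cases hu : u = 0
  · -- then v ≠ 0, σ = 0, contradiction with injectivity
    exfalso
    have hv : v ≠ 0 := by
      intro hv
      apply hx0
      funext s
      cases s with
      | inl i => exact congrFun hu i
      | inr j => exact congrFun hv j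
    have ht0 : t = 0 := by simp [ht_def, hu]
    have hQpos : (0:ℝ) < Q := normSq_sum_pos hv
    have hσ0 : σ = 0 := by
      have : σ * (Q : ℂ) = 0 := by rw [← e2', ht0]; simp
      rcases mul_eq_zero.mp this with h | h
      · exact h
      · exact absurd (by exact_mod_cast h) (ne_of_gt hQpos)
    have hBv : (cm B)ᵀ *ᵥ v = 0 := by
      have := h1
      rw [hu, hσ0] at this
      simpa using this
    exact hv (transpose_mulVec_inj_c B hB v hBv)
  · -- u ≠ 0 : a.re > 0
    have hare : 0 < a.re := by
      rw [ha_def, re_star_dot]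
      set ur : Fin d → ℝ := fun i => (u i).re
      set ui : Fin d → ℝ := fun i => (u i).im
      have hur_or : ur ≠ 0 ∨ ui ≠ 0 := by
        by_contra h
        push_neg at h
        apply hu
        funext i
        exact Complex.ext (congrFun h.1 i) (congrFun h.2 i)
      rcases hur_or with h | h
      · have := hA.dotProduct_mulVec_pos (x := ur) (by simpa using h)
        have h2 := hA.posSemidef.dotProduct_mulVec_nonneg ui
        simp only [star_trivial] at this h2
        nlinarith
      · have := hA.dotProduct_mulVec_pos (x := ui) (by simpa using h)
        have h2 := hA.posSemidef.dotProduct_mulVec_nonneg ur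
        simp only [star_trivial] at this h2
        nlinarith
    have hPpos : (0:ℝ) < P := normSq_sum_pos hu
    have hQ0 : (0:ℝ) ≤ Q := Finset.sum_nonneg fun i _ => Complex.normSq_nonneg _
    nlinarith [hre, hare, hPpos, hQ0]

lemma spec_shift {ι : Type*} [Fintype ι] [DecidableEq ι] (M' : Matrix ι ι ℂ)
    {c : ℂ} (hc : c ≠ 0) (σ : ℂ) (hσ : σ ∈ spectrum ℂ (1 - c • M')) :
    ∃ μ ∈ spectrum ℂ M', σ = 1 - c * μ := by
  rw [mem_spectrum_iff_eig] at hσ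
  obtain ⟨x, hx0, hx⟩ := hσ
  refine ⟨(1 - σ) / c, ?_, by field_simp; ring⟩
  rw [mem_spectrum_iff_eig]
  refine ⟨x, hx0, ?_⟩
  rw [sub_mulVec, one_mulVec, smul_mulVec] at hx
  have : c • (M' *ᵥ x) = (1 - σ) • x := by
    funext i
    have := congrFun hx i
    simp only [Pi.sub_apply, Pi.smul_apply, smul_eq_mul] at this ⊢
    ring_nf
    ring_nf at this
    linear_combination -this
  funext i
  have := congrFun this i
  simp only [Pi.smul_apply, smul_eq_mul] at this ⊢
  field_simp
  linear_combination this

lemma part2 {ι : Type*} [Fintype ι] [DecidableEq ι] (N : Matrix ι ι ℝ)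
    (h1 : ∀ σ ∈ spectrum ℂ (N.map (algebraMap ℝ ℂ)), 0 < σ.re) :
    ∃ η₀ : ℝ, 0 < η₀ ∧ ∀ η : ℝ, 0 < η → η < η₀ →
      matSpecRad ((1 : Matrix ι ι ℝ) - η • N) < 1 := by
  classical
  set M' := N.map (algebraMap ℝ ℂ) with hM'
  have hfin : (spectrum ℂ M').Finite := Matrix.finite_spectrum _
  set F := hfin.toFinset with hF_def
  have hFmem : ∀ μ, μ ∈ F ↔ μ ∈ spectrum ℂ M' := fun μ => hfin.mem_toFinset
  have hmap2 : ∀ η : ℝ, ((1 : Matrix ι ι ℝ) - η • N).map (algebraMap ℝ ℂ)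
      = 1 - (η : ℂ) • M' := by
    intro η
    ext i j
    simp only [Matrix.map_apply, Matrix.sub_apply, Matrix.smul_apply, Matrix.one_apply,
      Matrix.sub_apply, smul_eq_mul, Complex.coe_algebraMap, Complex.ofReal_sub,
      Complex.ofReal_mul, hM', apply_ite Complex.ofReal, Complex.ofReal_one,
      Complex.ofReal_zero]
  by_cases hF : F.Nonempty
  · refine ⟨min 1 (F.inf' hF fun μ => μ.re / Complex.normSq μ), ?_, ?_⟩
    · refine lt_min one_pos ?_
      rw [Finset.lt_inf'_iff]
      intro μ hμ
      have hre := h1 μ ((hFmem μ).mp hμ)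
      have hμ0 : μ ≠ 0 := fun h => by simp [h] at hre
      exact div_pos hre (Complex.normSq_pos.mpr hμ0)
    · intro η hη hηlt
      have hηc : (η : ℂ) ≠ 0 := by exact_mod_cast ne_of_gt hη
      have hbound : ∀ μ ∈ spectrum ℂ M', ‖1 - (η:ℂ) * μ‖₊ < 1 := by
        intro μ hμ
        have hre := h1 μ hμ
        have hμ0 : μ ≠ 0 := fun h => by simp [h] at hre
        have hnsq : 0 < Complex.normSq μ := Complex.normSq_pos.mpr hμ0
        have hlt : η < μ.re / Complex.normSq μ :=
          lt_of_lt_of_le hηlt <| (min_le_right _ _).trans (Finset.inf'_le _ ((hFmem μ).mpr hμ))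
        have hkey : η * Complex.normSq μ < μ.re := by
          rw [lt_div_iff₀ hnsq] at hlt; linarith
        have hnormSq : Complex.normSq (1 - (η:ℂ) * μ) < 1 := by
          simp only [Complex.normSq_apply, Complex.sub_re, Complex.sub_im, Complex.one_re,
            Complex.one_im, Complex.mul_re, Complex.mul_im, Complex.ofReal_re,
            Complex.ofReal_im, Complex.normSq_apply] at hnsq hkey ⊢
          nlinarith
        have hnorm : ‖1 - (η:ℂ) * μ‖ < 1 := by
          have h1' : ‖1 - (η:ℂ) * μ‖ ^ 2 = Complex.normSq (1 - (η:ℂ) * μ) := by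
            rw [Complex.sq_norm]
          nlinarith [norm_nonneg (1 - (η:ℂ) * μ)]
        rw [← NNReal.coe_lt_coe]
        simpa using hnorm
      rw [matSpecRad, hmap2 η]
      set r : NNReal := F.sup' hF fun μ => ‖1 - (η:ℂ) * μ‖₊ with hr_def
      have hr1 : r < 1 := by
        rw [hr_def, Finset.sup'_lt_iff]
        intro μ hμ
        exact hbound μ ((hFmem μ).mp hμ)
      calc spectralRadius ℂ (1 - (η:ℂ) • M') ≤ (r : ENNReal) := by
            rw [spectralRadius]
            refine iSup₂_le fun σ hσ => ?_
            obtain ⟨μ, hμ, rfl⟩ := spec_shift M' hηc σ hσ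
            exact_mod_cast ENNReal.coe_le_coe.mpr
              (Finset.le_sup' (f := fun μ => ‖1 - (η:ℂ) * μ‖₊) ((hFmem μ).mpr hμ))
        _ < 1 := by exact_mod_cast ENNReal.coe_lt_coe.mpr hr1
  · refine ⟨1, one_pos, ?_⟩
    intro η hη _
    have hηc : (η : ℂ) ≠ 0 := by exact_mod_cast ne_of_gt hη
    have hempty : spectrum ℂ (1 - (η:ℂ) • M') = ∅ := by
      ext σ
      simp only [Set.mem_empty_iff_false, iff_false]
      intro hσ
      obtain ⟨μ, hμ, _⟩ := spec_shift M' hηc σ hσ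
      exact hF ⟨μ, (hFmem μ).mpr hμ⟩
    rw [matSpecRad, hmap2 η, spectralRadius, hempty]
    simp

theorem stmt_17 (d k : ℕ) (A : Matrix (Fin d) (Fin d) ℝ) (hA : A.PosDef)
    (B : Matrix (Fin k) (Fin d) ℝ) (hB : B.rank = k) :
    (∀ σ ∈ spectrum ℂ
        ((Matrix.fromBlocks A Bᵀ (-B) (0 : Matrix (Fin k) (Fin k) ℝ)).map
          (algebraMap ℝ ℂ)), 0 < σ.re) ∧
    ∃ η₀ : ℝ, 0 < η₀ ∧ ∀ η : ℝ, 0 < η → η < η₀ →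
      matSpecRad ((1 : Matrix (Fin d ⊕ Fin k) (Fin d ⊕ Fin k) ℝ)
        - η • Matrix.fromBlocks A Bᵀ (-B) (0 : Matrix (Fin k) (Fin k) ℝ)) < 1 :=
  ⟨part1 A hA B hB, part2 _ (part1 A hA B hB)⟩
end
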